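/- arXiv:2105.06862 — 2 statements merged into one kernel-verified Lean document; each statement's English description precedes it below -/
import Mathlib

section
/- Let r ∈ ℕ₀ and suppose Assumption A1 holds with k = 0. Then the mapping ψ ↦ Σ_{i=0}^{r} ‖Î[ψ'(t̂)·(1+t̂)^i] + δ_{0,i}·ψ(-1)‖ defines a norm on the space P_r([-1,1], ℝ^d), where ‖·‖ denotes the Euclidean norm on ℝ^d. -/
open Set MeasureTheory
open scoped BigOperators RealInnerProductSpace

noncomputable section

/-- `ℝ^d` with the Euclidean norm. -/
abbrev Vec (d : ℕ) := EuclideanSpace ℝ (Fin d)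

/-- `φ : ℝ → ℝ` is (the evaluation of) a polynomial of degree at most `s`
(`s : ℤ`; for `s < 0` this means the zero function). -/
def IsPolyR (s : ℤ) (φ : ℝ → ℝ) : Prop :=
  ∃ p : Polynomial ℝ, (∀ n : ℕ, s < (n : ℤ) → p.coeff n = 0) ∧ ∀ x : ℝ, φ x = p.eval x

/-- Vector-valued polynomials of degree at most `s`, componentwise. -/
def IsPolyV {d : ℕ} (s : ℤ) (φ : ℝ → Vec d) : Prop :=
  ∀ i : Fin d, IsPolyR s fun x => φ x i

/-- Componentwise application of a (reference) integrator to a vector-valued function. -/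
def vecI {d : ℕ} (Ih : (ℝ → ℝ) →ₗ[ℝ] ℝ) (φ : ℝ → Vec d) : Vec d :=
  WithLp.toLp 2 fun i => Ih fun x => φ x i

/-- Componentwise application of a (reference) approximation operator. -/
def vecOp {d : ℕ} (Ic : (ℝ → ℝ) →ₗ[ℝ] (ℝ → ℝ)) (φ : ℝ → Vec d) : ℝ → Vec d :=
  fun x => WithLp.toLp 2 fun i => Ic (fun y => φ y i) x

/-- Affine map of the reference interval `(-1,1]` onto `(a,b]`. -/
def Tmap (a b x : ℝ) : ℝ := (a + b) / 2 + (b - a) / 2 * x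

/-- Inverse of `Tmap a b`. -/
def Tinv (a b x : ℝ) : ℝ := (2 * x - (a + b)) / (b - a)

/-- Local (vector-valued) integrator `I_n` on `(a,b]`. -/
def locI {d : ℕ} (Ih : (ℝ → ℝ) →ₗ[ℝ] ℝ) (a b : ℝ) (φ : ℝ → Vec d) : Vec d :=
  ((b - a) / 2) • vecI Ih (φ ∘ Tmap a b)

/-- Local scalar integrator on `(a,b]`. -/
def locIs (Ih : (ℝ → ℝ) →ₗ[ℝ] ℝ) (a b : ℝ) (g : ℝ → ℝ) : ℝ :=
  (b - a) / 2 * Ih (g ∘ Tmap a b)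

/-- Local approximation operator `ℐ_n` on `(a,b]` (vector-valued). -/
def locOp {d : ℕ} (Ic : (ℝ → ℝ) →ₗ[ℝ] (ℝ → ℝ)) (a b : ℝ) (φ : ℝ → Vec d) : ℝ → Vec d :=
  fun x => vecOp Ic (φ ∘ Tmap a b) (Tinv a b x)

/-- Local approximation operator `ℐ_n` on `(a,b]` (scalar). -/
def locOpR (Ic : (ℝ → ℝ) →ₗ[ℝ] (ℝ → ℝ)) (a b : ℝ) (φ : ℝ → ℝ) : ℝ → ℝ :=
  fun x => Ic (φ ∘ Tmap a b) (Tinv a b x)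

/-- Supremum of the (Euclidean) norm over a set of times. -/
def supNorm {d : ℕ} (s : Set ℝ) (φ : ℝ → Vec d) : ℝ := ⨆ x : s, ‖φ (x : ℝ)‖

/-- Supremum of the absolute value over a set of times. -/
def supAbs (s : Set ℝ) (g : ℝ → ℝ) : ℝ := ⨆ x : s, |g (x : ℝ)|

/-- `k_𝒥 = max{⌊k/2⌋ − 1, k_𝓘, k_ℐ}`. -/
def kJ (k : ℤ) (kI kIc : ℕ) : ℕ := max (max (k.fdiv 2 - 1).toNat kI) kIc

/-- Assumption A1 on the reference integrator. -/
def AssumptionA1 (Ih : (ℝ → ℝ) →ₗ[ℝ] ℝ) (r k : ℤ) : Prop :=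
  ∀ ψ : ℝ → ℝ, IsPolyR (r - max 1 k) ψ →
    (∀ φ : ℝ → ℝ, IsPolyR (r - max 1 k) φ →
      Ih (fun x => (1 - x) ^ (k.fdiv 2).toNat * (1 + x) ^ ((k - 1).fdiv 2).natAbs *
        (ψ x * φ x)) = 0) →
    ∀ x : ℝ, ψ x = 0

/-- Assumption A2 on the reference integrator. -/
def AssumptionA2 (d : ℕ) (Ih : (ℝ → ℝ) →ₗ[ℝ] ℝ) (kI : ℕ) (C0 : ℝ) : Prop :=
  ∀ φ : ℝ → Vec d, ContDiffOn ℝ (kI : ℕ∞) φ (Icc (-1 : ℝ) 1) →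
    ‖vecI Ih φ‖ ≤ C0 * ∑ j ∈ Finset.range (kI + 1),
      supNorm (Icc (-1 : ℝ) 1) (iteratedDerivWithin j φ (Icc (-1 : ℝ) 1))

/-- Assumption A3 on the reference approximation operator. -/
def AssumptionA3 (d : ℕ) (Ic : (ℝ → ℝ) →ₗ[ℝ] (ℝ → ℝ)) (kI kIc : ℕ) (C1 : ℝ) : Prop :=
  ∀ l : ℕ, l ≤ kI → ∀ φ : ℝ → Vec d,
    ContDiffOn ℝ ((max kIc l : ℕ) : ℕ∞) φ (Icc (-1 : ℝ) 1) →
    supNorm (Icc (-1 : ℝ) 1) (iteratedDerivWithin l (vecOp Ic φ) (Icc (-1 : ℝ) 1)) ≤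
      C1 * ∑ j ∈ Finset.range (max kIc l + 1),
        supNorm (Icc (-1 : ℝ) 1) (iteratedDerivWithin j φ (Icc (-1 : ℝ) 1))

/-- Assumption A4, with smoothness level `m` playing the role of `k_𝒥`. -/
def AssumptionA4 (d : ℕ) (f : ℝ → Vec d → Vec d) (t0 T C2 : ℝ) (m : ℕ) : Prop :=
  ∀ i : ℕ, i ≤ m → ∀ v w : ℝ → Vec d, ContDiff ℝ (⊤ : ℕ∞) v → ContDiff ℝ (⊤ : ℕ∞) w →
    ∀ᵐ s ∂(volume.restrict (Icc t0 (t0 + T))),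
      ‖iteratedDeriv i (fun x => f x (v x) - f x (w x)) s‖ ≤
        C2 * ∑ l ∈ Finset.range (i + 1), ‖iteratedDeriv l (fun x => v x - w x) s‖

/-- Assumption A5a, stated for all local intervals. -/
def AssumptionA5a (d : ℕ) (Ic : (ℝ → ℝ) →ₗ[ℝ] (ℝ → ℝ)) (kI kIc : ℕ)
    (K : ℕ) (th : Fin (K + 1) → ℝ) (Kt : Fin (K + 1) → ℕ) (C11 C12 : ℝ) : Prop :=
  Function.Injective th ∧ (∀ m, th m ∈ Icc (-1 : ℝ) 1) ∧
  ∀ a b : ℝ, a < b → b - a ≤ 1 → ∀ l : ℕ, l ≤ kI →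
    ∀ φ : ℝ → Vec d, ContDiffOn ℝ (kIc : ℕ∞) φ (Icc a b) →
      ContDiffOn ℝ (l : ℕ∞) (locOp Ic a b φ) (Icc a b) ∧
      ((b - a) / 2) ^ l *
          supNorm (Ioc a b) (iteratedDerivWithin l (locOp Ic a b φ) (Icc a b)) ≤
        C11 * ∑ m : Fin (K + 1), ∑ j ∈ Finset.range (Kt m + 1),
            ((b - a) / 2) ^ j *
              ‖iteratedDerivWithin j φ (Icc a b) (Tmap a b (th m))‖ +
        C12 * supNorm (Ioc a b) φ

/-- The conditions defining `Ĵ v` on the reference interval. -/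
def JCondRef (Ih : (ℝ → ℝ) →ₗ[ℝ] ℝ) (Ic : (ℝ → ℝ) →ₗ[ℝ] (ℝ → ℝ)) (r k : ℤ)
    (v w : ℝ → ℝ) : Prop :=
  IsPolyR r w ∧
  (1 ≤ k → ∀ i : ℕ, (i : ℤ) ≤ (k - 1).fdiv 2 →
    iteratedDeriv i w (-1) = iteratedDerivWithin i v (Icc (-1 : ℝ) 1) (-1)) ∧
  (2 ≤ k → ∀ i : ℕ, 1 ≤ i → (i : ℤ) ≤ k.fdiv 2 →
    iteratedDeriv i w 1 = iteratedDerivWithin i v (Icc (-1 : ℝ) 1) 1) ∧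
  (∀ φ : ℝ → ℝ, IsPolyR (r - k) φ →
    Ih (fun x => deriv w x * φ x) + (if k = 0 then w (-1) * φ (-1) else 0) =
    Ih (fun x => Ic (derivWithin v (Icc (-1 : ℝ) 1)) x * φ x) +
      (if k = 0 then v (-1) * φ (-1) else 0))

/-- The conditions defining the local approximation `J_n v` on `(a,b]`. -/
def JCondLoc (d : ℕ) (Ih : (ℝ → ℝ) →ₗ[ℝ] ℝ) (Ic : (ℝ → ℝ) →ₗ[ℝ] (ℝ → ℝ)) (r k : ℤ)
    (a b : ℝ) (v w : ℝ → Vec d) : Prop :=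
  IsPolyV r w ∧
  (1 ≤ k → ∀ i : ℕ, (i : ℤ) ≤ (k - 1).fdiv 2 →
    iteratedDeriv i w a = iteratedDerivWithin i v (Icc a b) a) ∧
  (2 ≤ k → ∀ i : ℕ, 1 ≤ i → (i : ℤ) ≤ k.fdiv 2 →
    iteratedDeriv i w b = iteratedDerivWithin i v (Icc a b) b) ∧
  (∀ φ : ℝ → Vec d, IsPolyV (r - k) φ →
    locIs Ih a b (fun x => ⟪deriv w x, φ x⟫) +
        (if k = 0 then ⟪w a, φ a⟫ else 0) =
      locIs Ih a b (fun x => ⟪locOp Ic a b (derivWithin v (Icc a b)) x, φ x⟫) +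
        (if k = 0 then ⟪v a, φ a⟫ else 0))

/-- The conditions defining `P̂ v` on the reference interval. -/
def PCondRef (Ih : (ℝ → ℝ) →ₗ[ℝ] ℝ) (Ic : (ℝ → ℝ) →ₗ[ℝ] (ℝ → ℝ)) (r k : ℤ)
    (v w : ℝ → ℝ) : Prop :=
  IsPolyR (r - 1) w ∧
  (3 ≤ k → ∀ i : ℕ, (i : ℤ) ≤ (k - 1).fdiv 2 - 1 →
    iteratedDeriv i w (-1) = iteratedDerivWithin i v (Icc (-1 : ℝ) 1) (-1)) ∧
  (2 ≤ k → ∀ i : ℕ, (i : ℤ) ≤ k.fdiv 2 - 1 →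
    iteratedDeriv i w 1 = iteratedDerivWithin i v (Icc (-1 : ℝ) 1) 1) ∧
  (∀ φ : ℝ → ℝ, IsPolyR (r - k) φ → (k = 0 → φ (-1) = 0) →
    Ih (fun x => w x * φ x) = Ih (fun x => Ic v x * φ x))

/-- The conditions defining the local approximation `P_n v` on `(a,b]`. -/
def PCondLoc (d : ℕ) (Ih : (ℝ → ℝ) →ₗ[ℝ] ℝ) (Ic : (ℝ → ℝ) →ₗ[ℝ] (ℝ → ℝ)) (r k : ℤ)
    (a b : ℝ) (v w : ℝ → Vec d) : Prop :=
  IsPolyV (r - 1) w ∧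
  (3 ≤ k → ∀ i : ℕ, (i : ℤ) ≤ (k - 1).fdiv 2 - 1 →
    iteratedDeriv i w a = iteratedDerivWithin i v (Icc a b) a) ∧
  (2 ≤ k → ∀ i : ℕ, (i : ℤ) ≤ k.fdiv 2 - 1 →
    iteratedDeriv i w b = iteratedDerivWithin i v (Icc a b) b) ∧
  (∀ φ : ℝ → Vec d, IsPolyV (r - k) φ → (k = 0 → φ a = 0) →
    locIs Ih a b (fun x => ⟪w x, φ x⟫) =
      locIs Ih a b (fun x => ⟪locOp Ic a b v x, φ x⟫))

/-- The local variational time discretization problem on `(a,b]` with incoming value `Uprev`. -/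
def LocalVTD (d : ℕ) (Ih : (ℝ → ℝ) →ₗ[ℝ] ℝ) (Ic : (ℝ → ℝ) →ₗ[ℝ] (ℝ → ℝ)) (r k : ℤ)
    (a b : ℝ) (f : ℝ → Vec d → Vec d) (Uprev : Vec d) (U : ℝ → Vec d) : Prop :=
  IsPolyV r U ∧
  (1 ≤ k → U a = Uprev) ∧
  (2 ≤ k → ∀ i : ℕ, (i : ℤ) ≤ k.fdiv 2 - 1 →
    iteratedDeriv (i + 1) U b = iteratedDeriv i (fun s => f s (U s)) b) ∧
  (3 ≤ k → ∀ i : ℕ, (i : ℤ) ≤ (k - 1).fdiv 2 - 1 →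
    iteratedDeriv (i + 1) U a = iteratedDeriv i (fun s => f s (U s)) a) ∧
  (∀ φ : ℝ → Vec d, IsPolyV (r - k) φ →
    locIs Ih a b (fun s => ⟪deriv U s, φ s⟫) +
        (if k = 0 then ⟪U a - Uprev, φ a⟫ else 0) =
      locIs Ih a b (fun s => ⟪locOp Ic a b (fun x => f x (U x)) s, φ s⟫))

/-- The global discrete solution of the variational time discretization:
`P n` is the local polynomial on `I_n = (t_{n-1}, t_n]`. -/
def IsVTDSolution (d : ℕ) (Ih : (ℝ → ℝ) →ₗ[ℝ] ℝ) (Ic : (ℝ → ℝ) →ₗ[ℝ] (ℝ → ℝ))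
    (r k : ℤ) (t : ℕ → ℝ) (N : ℕ) (f : ℝ → Vec d → Vec d) (u0 : Vec d)
    (P : ℕ → ℝ → Vec d) : Prop :=
  ∀ n : ℕ, 1 ≤ n → n ≤ N →
    LocalVTD d Ih Ic r k (t (n - 1)) (t n) f
      (if n = 1 then u0 else P (n - 1) (t (n - 1))) (P n)

/-- Exactness of the local integrator on polynomials of degree at most `ρ`. -/
def QuadExact (Ih : (ℝ → ℝ) →ₗ[ℝ] ℝ) (a b : ℝ) (ρ : ℤ) : Prop :=
  ∀ φ : ℝ → ℝ, IsPolyR ρ φ → (∫ x in Ioc a b, φ x) = locIs Ih a b φ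

/-- `I_n[φ ψ] = I_n[(ℐ_n φ) ψ]` for all `φ ∈ P_ρ` and `ψ ∈ P_i` (the property defining
`r^𝓘_{ℐ,i}`). -/
def QuadInterpExact (Ih : (ℝ → ℝ) →ₗ[ℝ] ℝ) (Ic : (ℝ → ℝ) →ₗ[ℝ] (ℝ → ℝ))
    (a b : ℝ) (ρ : ℤ) (i : ℕ) : Prop :=
  ∀ φ : ℝ → ℝ, IsPolyR ρ φ → ∀ ψ : ℝ → ℝ, IsPolyR (i : ℤ) ψ →
    locIs Ih a b (fun x => φ x * ψ x) = locIs Ih a b (fun x => locOpR Ic a b φ x * ψ x)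

/-- The defining interpolation conditions of the Hermite-type operator `𝓘ᵃᵖᵖ_n` on `(a,b]`. -/
def IsIapp (d : ℕ) (k : ℤ) (K : ℕ) (th : Fin (K + 1) → ℝ) (Kt : Fin (K + 1) → ℕ)
    (a b : ℝ) (R : ℕ) (J : (ℝ → Vec d) → (ℝ → Vec d)) : Prop :=
  ∀ φ : ℝ → Vec d, ContDiff ℝ (⊤ : ℕ∞) φ →
    IsPolyV (R : ℤ) (J φ) ∧
    (∀ l : ℕ, (l : ℤ) ≤ k.fdiv 2 - 1 → iteratedDeriv l (J φ) b = iteratedDeriv l φ b) ∧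
    (∀ l : ℕ, (l : ℤ) ≤ (k - 1).fdiv 2 - 1 →
      iteratedDeriv l (J φ) a = iteratedDeriv l φ a) ∧
    (∀ m : Fin (K + 1), ∀ l : ℕ, l ≤ Kt m →
      iteratedDeriv l (J φ) (Tmap a b (th m)) = iteratedDeriv l φ (Tmap a b (th m)))

/-- Composition `ℐ¹ ∘ ⋯ ∘ ℐˡ` of a finite family of operators. -/
def compOps (l : ℕ) (Ops : Fin l → ((ℝ → ℝ) →ₗ[ℝ] (ℝ → ℝ))) : (ℝ → ℝ) → (ℝ → ℝ) :=
  (List.ofFn (fun j : Fin l => (Ops j : (ℝ → ℝ) → (ℝ → ℝ)))).foldr (· ∘ ·) id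

/-- The candidate norm of Lemma 3.3 on `P_r([-1,1], ℝ^d)` (case `k = 0`). -/
def refNormMapDG (d : ℕ) (Ih : (ℝ → ℝ) →ₗ[ℝ] ℝ) (r : ℕ) (ψ : ℝ → Vec d) : ℝ :=
  ∑ i ∈ Finset.range (r + 1),
    ‖vecI Ih (fun x => (1 + x) ^ i • deriv ψ x) + (if i = 0 then ψ (-1) else 0)‖

/-! Each summand is the norm of a linear function of `ψ`, so only definiteness needs work.
If all summands vanish, then `Î[(1 + t) ψ' (1 + t)^m] = 0` for `m < r`; these powers span
`P_{r-1}`, so A1 forces `ψ' = 0`, and the summand `i = 0` then reduces to `ψ(-1) = 0`. -/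

open Polynomial

namespace IsPolyR

variable {φ : ℝ → ℝ}

lemma differentiable {s : ℤ} (h : IsPolyR s φ) : Differentiable ℝ φ := by
  obtain ⟨p, -, hp⟩ := h
  rw [show φ = fun x => p.eval x from funext hp]
  exact p.differentiable

protected lemma deriv {s : ℤ} (h : IsPolyR s φ) : IsPolyR (s - 1) (deriv φ) := by
  obtain ⟨p, hdeg, hp⟩ := h
  refine ⟨derivative p, fun n hn => ?_, fun x => ?_⟩
  · rw [coeff_derivative, hdeg (n + 1) (by push_cast; omega), zero_mul]
  · rw [show φ = fun x => p.eval x from funext hp, Polynomial.deriv]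

lemma exists_eq_sum_one_add_pow {n : ℕ} (h : IsPolyR (n - 1) φ) :
    ∃ c : Fin n → ℝ, ∀ x, φ x = ∑ m : Fin n, c m * (1 + x) ^ (m : ℕ) := by
  obtain ⟨p, hdeg, hp⟩ := h
  have hlt : (taylor (-1) p).degree < n := by
    rw [degree_taylor, degree_lt_iff_coeff_zero]
    exact fun m hm => hdeg m (by omega)
  refine ⟨fun m => (taylor (-1) p).coeff m, fun x => ?_⟩
  rw [hp, ← taylor_eval_sub (-1), eval_eq_sum,
    ← sum_fin (fun e a => a * (x - -1) ^ e) (fun _ => zero_mul _) hlt]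
  simp only [sub_neg_eq_add, add_comm x]

end IsPolyR

lemma IsPolyV.differentiable {d : ℕ} {s : ℤ} {ψ : ℝ → Vec d} (h : IsPolyV s ψ) :
    Differentiable ℝ ψ :=
  differentiable_euclidean.2 fun j => (h j).differentiable

lemma deriv_euclidean_apply {ι : Type*} [Fintype ι] {ψ : ℝ → EuclideanSpace ℝ ι} {x : ℝ}
    (h : DifferentiableAt ℝ ψ x) (j : ι) :
    deriv ψ x j = deriv (fun y => ψ y j) x :=
  (((PiLp.hasFDerivAt_apply 2 (ψ x) j).comp_hasDerivAt x h.hasDerivAt).deriv :).symm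

section vecI

variable {d : ℕ} (Ih : (ℝ → ℝ) →ₗ[ℝ] ℝ)

@[simp]
lemma vecI_apply (φ : ℝ → Vec d) (j : Fin d) : vecI Ih φ j = Ih fun x => φ x j := rfl

lemma vecI_smul (c : ℝ) (φ : ℝ → Vec d) : vecI Ih (fun x => c • φ x) = c • vecI Ih φ := by
  ext j
  simp only [vecI_apply, PiLp.smul_apply, smul_eq_mul]
  exact Ih.map_smul c fun x => φ x j

lemma vecI_add (φ χ : ℝ → Vec d) : vecI Ih (fun x => φ x + χ x) = vecI Ih φ + vecI Ih χ := by
  ext j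
  simp only [vecI_apply, PiLp.add_apply]
  exact Ih.map_add (fun x => φ x j) fun x => χ x j

end vecI

lemma AssumptionA1.eq_zero_of_weighted_moments_eq_zero {Ih : (ℝ → ℝ) →ₗ[ℝ] ℝ} {r : ℕ}
    (hA1 : AssumptionA1 Ih r 0) {q : ℝ → ℝ} (hq : IsPolyR (r - 1) q)
    (hmom : ∀ i, 1 ≤ i → i ≤ r → Ih (fun x => (1 + x) ^ i * q x) = 0) (x : ℝ) : q x = 0 := by
  have hdeg : (r : ℤ) - max 1 0 = r - 1 := rfl
  refine hA1 q (hdeg ▸ hq) (fun φ hφ => ?_) x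
  obtain ⟨c, hc⟩ := (hdeg ▸ hφ).exists_eq_sum_one_add_pow
  -- with `k = 0` the weight of Assumption A1 is `(1 + x)`, which shifts the powers
  have hexpand : (fun x => (1 - x) ^ ((0 : ℤ).fdiv 2).toNat *
      (1 + x) ^ ((0 - 1 : ℤ).fdiv 2).natAbs * (q x * φ x)) =
      ∑ m : Fin r, c m • fun x => (1 + x) ^ ((m : ℕ) + 1) * q x := by
    funext x
    simp only [hc x, Finset.sum_apply, Pi.smul_apply, smul_eq_mul, Finset.mul_sum]
    refine Finset.sum_congr rfl fun m _ => ?_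
    simp only [show ((0 : ℤ).fdiv 2).toNat = 0 from rfl,
      show ((0 - 1 : ℤ).fdiv 2).natAbs = 1 from rfl]
    ring
  rw [hexpand, map_sum]
  exact Finset.sum_eq_zero fun m _ => by
    rw [map_smul, hmom _ (Nat.le_add_left 1 m) m.isLt, smul_zero]

lemma AssumptionA1.eq_zero_of_moments_deriv_eq_zero {Ih : (ℝ → ℝ) →ₗ[ℝ] ℝ} {r : ℕ}
    (hA1 : AssumptionA1 Ih r 0) {f : ℝ → ℝ} (hf : IsPolyR r f)
    (hmom : ∀ i ≤ r, Ih (fun x => (1 + x) ^ i * deriv f x) + (if i = 0 then f (-1) else 0) = 0)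
    (x : ℝ) : f x = 0 := by
  have hderiv : ∀ y, deriv f y = 0 :=
    hA1.eq_zero_of_weighted_moments_eq_zero hf.deriv fun i hi hir => by
      simpa [Nat.one_le_iff_ne_zero.1 hi] using hmom i hir
  have hf_neg_one : f (-1) = 0 := by
    simpa [hderiv, ← Pi.zero_def] using hmom 0 (Nat.zero_le r)
  rw [is_const_of_deriv_eq_zero hf.differentiable hderiv x (-1), hf_neg_one]

def dgMoment {d : ℕ} (Ih : (ℝ → ℝ) →ₗ[ℝ] ℝ) (i : ℕ) (ψ : ℝ → Vec d) : Vec d :=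
  vecI Ih (fun x => (1 + x) ^ i • deriv ψ x) + if i = 0 then ψ (-1) else 0

section dgMoment

variable {d : ℕ} (Ih : (ℝ → ℝ) →ₗ[ℝ] ℝ) (i : ℕ)

lemma refNormMapDG_eq_sum_norm_dgMoment (r : ℕ) (ψ : ℝ → Vec d) :
    refNormMapDG d Ih r ψ = ∑ i ∈ Finset.range (r + 1), ‖dgMoment Ih i ψ‖ := rfl

lemma dgMoment_smul (c : ℝ) (ψ : ℝ → Vec d) : dgMoment Ih i (c • ψ) = c • dgMoment Ih i ψ := by
  simp only [dgMoment, deriv_const_smul_field, smul_comm _ c, vecI_smul, smul_add, Pi.smul_apply,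
    smul_ite, smul_zero]

lemma dgMoment_add {ψ χ : ℝ → Vec d} (hψ : Differentiable ℝ ψ) (hχ : Differentiable ℝ χ) :
    dgMoment Ih i (ψ + χ) = dgMoment Ih i ψ + dgMoment Ih i χ := by
  simp only [dgMoment, deriv_add (hψ _) (hχ _), smul_add, vecI_add, Pi.add_apply]
  split_ifs <;> abel

lemma dgMoment_apply {ψ : ℝ → Vec d} (hψ : Differentiable ℝ ψ) (j : Fin d) :
    dgMoment Ih i ψ j =
      Ih (fun x => (1 + x) ^ i * deriv (fun y => ψ y j) x) + if i = 0 then ψ (-1) j else 0 := by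
  simp only [dgMoment, PiLp.add_apply, vecI_apply, PiLp.smul_apply, smul_eq_mul,
    deriv_euclidean_apply (hψ _)]
  split_ifs <;> rfl

end dgMoment

lemma IsPolyV.eq_zero_of_dgMoment_eq_zero {d r : ℕ} {Ih : (ℝ → ℝ) →ₗ[ℝ] ℝ}
    (hA1 : AssumptionA1 Ih r 0) {ψ : ℝ → Vec d} (hψ : IsPolyV r ψ)
    (hmom : ∀ i ≤ r, dgMoment Ih i ψ = 0) (x : ℝ) : ψ x = 0 := by
  ext j
  refine hA1.eq_zero_of_moments_deriv_eq_zero (hψ j) (fun i hi => ?_) x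
  rw [← dgMoment_apply Ih i hψ.differentiable, hmom i hi, PiLp.zero_apply]

/-- Lemma 3.3: for `k = 0` the mapping `refNormMapDG` defines a norm on
`P_r([-1,1], ℝ^d)`. -/
theorem stmt_2 (d : ℕ) (r : ℕ)
    (Ih : (ℝ → ℝ) →ₗ[ℝ] ℝ) (hA1 : AssumptionA1 Ih (r : ℤ) 0) :
    (∀ ψ : ℝ → Vec d, IsPolyV (r : ℤ) ψ → 0 ≤ refNormMapDG d Ih r ψ) ∧
    (∀ (c : ℝ) (ψ : ℝ → Vec d), IsPolyV (r : ℤ) ψ →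
      refNormMapDG d Ih r (c • ψ) = |c| * refNormMapDG d Ih r ψ) ∧
    (∀ ψ χ : ℝ → Vec d, IsPolyV (r : ℤ) ψ → IsPolyV (r : ℤ) χ →
      refNormMapDG d Ih r (ψ + χ) ≤ refNormMapDG d Ih r ψ + refNormMapDG d Ih r χ) ∧
    (∀ ψ : ℝ → Vec d, IsPolyV (r : ℤ) ψ → refNormMapDG d Ih r ψ = 0 → ∀ x, ψ x = 0) := by
  simp only [refNormMapDG_eq_sum_norm_dgMoment]
  refine ⟨fun ψ _ => Finset.sum_nonneg fun i _ => norm_nonneg _, fun c ψ _ => ?_,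
    fun ψ χ hψ hχ => ?_, fun ψ hψ hzero => hψ.eq_zero_of_dgMoment_eq_zero hA1 fun i hi => ?_⟩
  · simp only [dgMoment_smul, norm_smul, Real.norm_eq_abs, Finset.mul_sum]
  · simp only [dgMoment_add Ih _ hψ.differentiable hχ.differentiable, ← Finset.sum_add_distrib]
    exact Finset.sum_le_sum fun i _ => norm_add_le _ _
  · rw [Finset.sum_eq_zero_iff_of_nonneg fun _ _ => norm_nonneg _] at hzero
    exact norm_eq_zero.1 (hzero i (Finset.mem_range_succ_iff.2 hi))

end
end

section
/- Let r ∈ ℕ (r ≥ 1) and k ∈ ℤ with 0 ≤ k ≤ r, and suppose Assumption A1 holds. Then for every v ∈ C^{k_𝒥}([-1,1], ℝ) there exists a unique polynomial P̂v ∈ P_{r−1}([-1,1], ℝ) satisfying: (P̂v)^{(i)}(-1) = v^{(i)}(-1) for i = 0,…,⌊(k−1)/2⌋ − 1 if k ≥ 3; (P̂v)^{(i)}(1) = v^{(i)}(1) for i = 0,…,⌊k/2⌋ − 1 if k ≥ 2; and Î[(P̂v)·φ] = Î[(Î𝓘 v)·φ] for all φ ∈ P_{r−k}([-1,1], ℝ)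 with δ_{0,k}·φ(-1) = 0. Moreover, if the reference approximation operator Î𝓘 reproduces all polynomials of degree at most r̃, then P̂ reproduces all polynomials of degree at most min{r̃, r−1}. -/
/-!
Both parts reduce to linear algebra on `P_{r-1}`. The conditions defining `P̂ v` form a linear
map from `P_{r-1}` to a space of the same dimension `r`: derivatives at `∓1`, and moments against
the test functions, which are exactly `(1 + x)^[k = 0] g` with `g ∈ P_{r - max 1 k}`.
A polynomial in its kernel vanishes to order `⌊(k-1)/2⌋` at `-1` and `⌊k/2⌋` at `1`, so it equals
`(1 + x)^⌊(k-1)/2⌋ (x - 1)^⌊k/2⌋ q`; the vanishing moments are then exactly the hypothesis of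
Assumption A1 for `q`, hence `q = 0`. Injectivity gives bijectivity, i.e. existence and
uniqueness; reproduction follows from uniqueness because a polynomial `v` of degree `< r` that
`Î𝓘` fixes satisfies its own defining conditions.
-/

open Set MeasureTheory
open scoped BigOperators RealInnerProductSpace

noncomputable section

namespace Polynomial

variable {K : Type*} [Field K]

def evalFun : K[X] →ₗ[K] K → K := LinearMap.pi fun x => leval x

@[simp] lemma evalFun_apply (p : K[X]) (x : K) : evalFun p x = p.eval x := rfl

def jet (a : K) (m : ℕ) : K[X] →ₗ[K] Fin m → K :=
  LinearMap.pi fun i => leval a ∘ₗ derivative ^ (i : ℕ)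

@[simp] lemma jet_apply (a : K) (m : ℕ) (p : K[X]) (i : Fin m) :
    jet a m p i = (derivative^[i] p).eval a := by
  simp [jet, Module.End.pow_apply]

lemma mem_degreeLT_of_mul_left {p q : K[X]} {m n : ℕ} (hp0 : p ≠ 0) (hp : p.natDegree = m)
    (h : p * q ∈ K[X]_(m + n)) : q ∈ K[X]_n := by
  rcases eq_or_ne q 0 with rfl | hq
  · exact zero_mem _
  rw [mem_degreeLT, ← natDegree_lt_iff_degree_lt hq]
  rw [mem_degreeLT, ← natDegree_lt_iff_degree_lt (mul_ne_zero hp0 hq), natDegree_mul hp0 hq,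
    hp] at h
  omega

lemma mul_mem_degreeLT {p q : K[X]} {m n : ℕ} (hp : p.natDegree ≤ m) (hq : q ∈ K[X]_n) :
    p * q ∈ K[X]_(m + n) := by
  rcases eq_or_ne p 0 with rfl | hp0
  · simp
  rcases eq_or_ne q 0 with rfl | hq0
  · simp
  rw [mem_degreeLT, ← natDegree_lt_iff_degree_lt hq0] at hq
  rw [mem_degreeLT, ← natDegree_lt_iff_degree_lt (mul_ne_zero hp0 hq0), natDegree_mul hp0 hq0]
  omega

variable [CharZero K]

lemma pow_X_sub_C_dvd_of_jet_eq_zero {a : K} {m : ℕ} {p : K[X]} (h : jet a m p = 0) :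
    (X - C a) ^ m ∣ p := by
  rcases eq_or_ne p 0 with rfl | hp
  · exact dvd_zero _
  rw [← le_rootMultiplicity_iff hp]
  rcases m with _ | m
  · exact Nat.zero_le _
  exact lt_rootMultiplicity_of_isRoot_iterate_derivative hp fun i hi => by
    simpa using congrFun h ⟨i, by omega⟩

lemma exists_eq_mul_of_jet_eq_zero {a b : K} (hab : a ≠ b) {m₁ m₂ n : ℕ} {p : K[X]}
    (hp : p ∈ K[X]_n) (ha : jet a m₁ p = 0) (hb : jet b m₂ p = 0) :
    ∃ q ∈ K[X]_(n - m₁ - m₂), p = (X - C a) ^ m₁ * (X - C b) ^ m₂ * q := by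
  rcases eq_or_ne p 0 with rfl | hp0
  · exact ⟨0, zero_mem _, by simp⟩
  have hcop : IsCoprime ((X - C a) ^ m₁) ((X - C b) ^ m₂) :=
    (isCoprime_X_sub_C_of_isUnit_sub (sub_ne_zero.2 hab).isUnit).pow
  obtain ⟨q, rfl⟩ :=
    hcop.mul_dvd (pow_X_sub_C_dvd_of_jet_eq_zero ha) (pow_X_sub_C_dvd_of_jet_eq_zero hb)
  have hW0 : (X - C a) ^ m₁ * (X - C b) ^ m₂ ≠ 0 := by simp [X_sub_C_ne_zero]
  have hW : ((X - C a) ^ m₁ * (X - C b) ^ m₂).natDegree = m₁ + m₂ := by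
    simp [natDegree_mul, X_sub_C_ne_zero]
  have hle : m₁ + m₂ < n := by
    rw [mem_degreeLT, ← natDegree_lt_iff_degree_lt hp0] at hp
    exact hW ▸ (natDegree_le_of_dvd (dvd_mul_right _ q) hp0).trans_lt hp
  refine ⟨q, mem_degreeLT_of_mul_left hW0 hW ?_, rfl⟩
  rwa [show m₁ + m₂ + (n - m₁ - m₂) = n by omega]

lemma iteratedDeriv_eval {𝕜 : Type*} [NontriviallyNormedField 𝕜] (p : 𝕜[X]) (n : ℕ) :
    iteratedDeriv n (fun x => p.eval x) = fun x => (derivative^[n] p).eval x := by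
  induction n with
  | zero => rfl
  | succ n ih =>
    ext x
    rw [iteratedDeriv_succ, ih, Function.iterate_succ_apply']
    exact Polynomial.deriv _

end Polynomial

open Polynomial

lemma isPolyR_iff {s : ℤ} {n : ℕ} (hn : s + 1 = n) {φ : ℝ → ℝ} :
    IsPolyR s φ ↔ ∃ p ∈ ℝ[X]_n, φ = fun x => p.eval x := by
  simp only [IsPolyR, mem_degreeLT, degree_lt_iff_coeff_zero, funext_iff]
  refine exists_congr fun p => and_congr_left' (forall_congr' fun m => ?_)
  constructor <;> intro h hm <;> exact h (by exact_mod_cast (by omega : _))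

lemma IsPolyR.mono {s t : ℤ} (hst : s ≤ t) {φ : ℝ → ℝ} (h : IsPolyR s φ) : IsPolyR t φ :=
  let ⟨p, hp, hφ⟩ := h
  ⟨p, fun n hn => hp n (hst.trans_lt hn), hφ⟩

lemma IsPolyR.iteratedDerivWithin_eq {s : ℤ} {φ : ℝ → ℝ} (hφ : IsPolyR s φ) (n : ℕ)
    {t : Set ℝ} (ht : UniqueDiffOn ℝ t) {x : ℝ} (hx : x ∈ t) :
    iteratedDerivWithin n φ t x = iteratedDeriv n φ x := by
  obtain ⟨p, -, hp⟩ := hφ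
  obtain rfl : φ = fun x => p.eval x := funext hp
  exact iteratedDerivWithin_eq_iteratedDeriv ht
    (contDiff_aeval (R := ℝ) (𝕜 := ℝ) p n).contDiffAt hx

-- The conditions of `P̂ v` at `-1` are indexed by `i < numLeft k`, those at `1` by
-- `i < numRight k`; `toNat` absorbs the small `k` for which there are none.
def numLeft (k : ℤ) : ℕ := ((k - 1).fdiv 2).toNat

def numRight (k : ℤ) : ℕ := (k.fdiv 2).toNat

-- The test functions are `(1 + x) ^ testPow k * g` with `g ∈ ℝ[X]_(testDim r k)`; for `k = 0`
-- the factor `1 + x` encodes the constraint `φ (-1) = 0`.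
def testPow (k : ℤ) : ℕ := if k = 0 then 1 else 0

def testDim (r : ℕ) (k : ℤ) : ℕ := r - numLeft k - numRight k

section Counting

variable {r : ℕ} {k : ℤ}

lemma forall_lt_numLeft_iff (h0k : 0 ≤ k) {P : ℕ → Prop} :
    (3 ≤ k → ∀ i : ℕ, (i : ℤ) ≤ (k - 1).fdiv 2 - 1 → P i) ↔ ∀ i : Fin (numLeft k), P i := by
  rw [numLeft, Int.fdiv_eq_ediv_of_nonneg _ zero_le_two, Fin.forall_iff]
  exact ⟨fun h i hi => h (by omega) i (by omega), fun h _ i hi => h i (by omega)⟩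

lemma forall_lt_numRight_iff {P : ℕ → Prop} :
    (2 ≤ k → ∀ i : ℕ, (i : ℤ) ≤ k.fdiv 2 - 1 → P i) ↔ ∀ i : Fin (numRight k), P i := by
  rw [numRight, Int.fdiv_eq_ediv_of_nonneg _ zero_le_two, Fin.forall_iff]
  exact ⟨fun h i hi => h (by omega) i (by omega), fun h _ i hi => h i (by omega)⟩

lemma natAbs_fdiv_two_sub_one (h0k : 0 ≤ k) :
    ((k - 1).fdiv 2).natAbs = numLeft k + testPow k := by
  rw [numLeft, testPow, Int.fdiv_eq_ediv_of_nonneg _ zero_le_two]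
  split_ifs <;> omega

lemma numLeft_add_numRight_add_testDim (hkr : k ≤ r) :
    numLeft k + numRight k + testDim r k = r := by
  rw [testDim, numLeft, numRight, Int.fdiv_eq_ediv_of_nonneg _ zero_le_two,
    Int.fdiv_eq_ediv_of_nonneg _ zero_le_two]
  omega

lemma testDim_eq (h0k : 0 ≤ k) (hkr : k ≤ r) : (r : ℤ) - max 1 k + 1 = testDim r k := by
  have := numLeft_add_numRight_add_testDim hkr
  rw [numLeft, numRight, Int.fdiv_eq_ediv_of_nonneg _ zero_le_two,
    Int.fdiv_eq_ediv_of_nonneg _ zero_le_two] at this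
  omega

lemma testPow_add_testDim (h0k : 0 ≤ k) (hkr : k ≤ r) :
    (r : ℤ) - k + 1 = testPow k + testDim r k := by
  have := testDim_eq h0k hkr
  rw [testPow]
  split_ifs <;> omega

end Counting

section TestSpace

variable {r : ℕ} {k : ℤ}

lemma isPolyR_and_iff_exists_mul (h0k : 0 ≤ k) (hkr : k ≤ r) {φ : ℝ → ℝ} :
    (IsPolyR (r - k) φ ∧ (k = 0 → φ (-1) = 0)) ↔
      ∃ g ∈ ℝ[X]_(testDim r k), φ = fun x => (1 + x) ^ testPow k * g.eval x := by
  have hn := testPow_add_testDim h0k hkr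
  have hW : ((X - C (-1 : ℝ)) ^ testPow k).natDegree = testPow k := by
    rw [natDegree_pow, natDegree_X_sub_C, mul_one]
  rw [isPolyR_iff (by exact_mod_cast hn)]
  constructor
  · rintro ⟨⟨f, hf, rfl⟩, h0⟩
    obtain ⟨g, rfl⟩ : (X - C (-1 : ℝ)) ^ testPow k ∣ f := by
      unfold testPow
      split_ifs with hk
      · exact (pow_one (X - C (-1 : ℝ))).symm ▸ dvd_iff_isRoot.2 (by simpa using h0 hk)
      · simp
    refine ⟨g, mem_degreeLT_of_mul_left (pow_ne_zero _ (X_sub_C_ne_zero _)) hW hf,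
      funext fun x => ?_⟩
    simp [add_comm]
  · rintro ⟨g, hg, rfl⟩
    refine ⟨⟨_, mul_mem_degreeLT hW.le hg, funext fun x => ?_⟩, fun hk => by simp [testPow, hk]⟩
    simp [add_comm]

lemma forall_isPolyR_imp_iff (h0k : 0 ≤ k) (hkr : k ≤ r) {P : (ℝ → ℝ) → Prop} :
    (∀ φ, IsPolyR (r - k) φ → (k = 0 → φ (-1) = 0) → P φ) ↔
      ∀ g ∈ ℝ[X]_(testDim r k), P fun x => (1 + x) ^ testPow k * g.eval x := by
  constructor
  · intro h g hg
    obtain ⟨hφ, h0⟩ := (isPolyR_and_iff_exists_mul h0k hkr).2 ⟨g, hg, rfl⟩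
    exact h _ hφ h0
  · intro h φ hφ h0
    obtain ⟨g, hg, rfl⟩ := (isPolyR_and_iff_exists_mul h0k hkr).1 ⟨hφ, h0⟩
    exact h g hg

lemma AssumptionA1.eq_zero {Ih : (ℝ → ℝ) →ₗ[ℝ] ℝ} (hA1 : AssumptionA1 Ih r k) (h0k : 0 ≤ k)
    (hkr : k ≤ r) {q : ℝ[X]} (hq : q ∈ ℝ[X]_(testDim r k))
    (h : ∀ g ∈ ℝ[X]_(testDim r k), Ih (fun x => (1 - x) ^ numRight k *
      (1 + x) ^ (numLeft k + testPow k) * (q.eval x * g.eval x)) = 0) :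
    q = 0 := by
  have hn := testDim_eq h0k hkr
  refine Polynomial.funext fun x => ?_
  refine (hA1 _ ((isPolyR_iff hn).2 ⟨q, hq, rfl⟩) (fun φ hφ => ?_) x).trans (eval_zero).symm
  obtain ⟨g, hg, rfl⟩ := (isPolyR_iff hn).1 hφ
  rw [natAbs_fdiv_two_sub_one h0k]
  exact h g hg

end TestSpace

def testMoment (Ih : (ℝ → ℝ) →ₗ[ℝ] ℝ) (k : ℤ) (n : ℕ) :
    (ℝ → ℝ) →ₗ[ℝ] Module.Dual ℝ ℝ[X]_n :=
  ((LinearMap.mul ℝ (ℝ → ℝ)).compr₂ Ih).compl₂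
    (LinearMap.mulLeft ℝ (fun x => (1 + x) ^ testPow k) ∘ₗ evalFun ∘ₗ (ℝ[X]_n).subtype)

@[simp] lemma testMoment_apply (Ih : (ℝ → ℝ) →ₗ[ℝ] ℝ) (k : ℤ) (n : ℕ) (f : ℝ → ℝ)
    (g : ℝ[X]_n) :
    testMoment Ih k n f g = Ih fun x => f x * ((1 + x) ^ testPow k * (g : ℝ[X]).eval x) :=
  rfl

abbrev PCondSpace (r : ℕ) (k : ℤ) : Type :=
  (Fin (numLeft k) → ℝ) × (Fin (numRight k) → ℝ) × Module.Dual ℝ ℝ[X]_(testDim r k)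

def pcondMap (Ih : (ℝ → ℝ) →ₗ[ℝ] ℝ) (r : ℕ) (k : ℤ) : ℝ[X]_r →ₗ[ℝ] PCondSpace r k :=
  ((jet (-1) _).prod ((jet 1 _).prod (testMoment Ih k _ ∘ₗ evalFun))) ∘ₗ (ℝ[X]_r).subtype

lemma pcondMap_apply (Ih : (ℝ → ℝ) →ₗ[ℝ] ℝ) (r : ℕ) (k : ℤ) (p : ℝ[X]_r) :
    pcondMap Ih r k p = (jet (-1) _ p, jet 1 _ p, testMoment Ih k _ (evalFun p)) :=
  rfl

def pcondData (Ih : (ℝ → ℝ) →ₗ[ℝ] ℝ) (Ic : (ℝ → ℝ) →ₗ[ℝ] (ℝ → ℝ)) (r : ℕ) (k : ℤ)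
    (v : ℝ → ℝ) : PCondSpace r k :=
  (fun i => iteratedDerivWithin i v (Icc (-1 : ℝ) 1) (-1),
    fun i => iteratedDerivWithin i v (Icc (-1 : ℝ) 1) 1, testMoment Ih k _ (Ic v))

section PCond

variable {Ih : (ℝ → ℝ) →ₗ[ℝ] ℝ} {Ic : (ℝ → ℝ) →ₗ[ℝ] (ℝ → ℝ)} {r : ℕ} {k : ℤ}

lemma pcondRef_eval_iff (h0k : 0 ≤ k) (hkr : k ≤ r) (p : ℝ[X]_r) (v : ℝ → ℝ) :
    PCondRef Ih Ic r k v (fun x => (p : ℝ[X]).eval x) ↔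
      pcondMap Ih r k p = pcondData Ih Ic r k v := by
  rw [PCondRef, forall_lt_numLeft_iff h0k, forall_lt_numRight_iff, forall_isPolyR_imp_iff h0k hkr]
  simp only [iteratedDeriv_eval, pcondMap_apply, pcondData, Prod.ext_iff, funext_iff,
    LinearMap.ext_iff, Subtype.forall]
  rw [and_iff_right ((isPolyR_iff (by ring)).2 ⟨p, p.2, rfl⟩)]
  simp

lemma pcondMap_injective (hA1 : AssumptionA1 Ih r k) (h0k : 0 ≤ k) (hkr : k ≤ r) :
    Function.Injective (pcondMap Ih r k) := by
  rw [injective_iff_map_eq_zero]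
  rintro ⟨p, hp⟩ h
  rw [pcondMap_apply, Prod.mk_eq_zero, Prod.mk_eq_zero] at h
  obtain ⟨hleft, hright, hmoment⟩ := h
  obtain ⟨q, hq, rfl⟩ := exists_eq_mul_of_jet_eq_zero (by norm_num) hp hleft hright
  obtain rfl : q = 0 := hA1.eq_zero h0k hkr hq fun g hg => by
    have hfun : (fun x => eval x ((X - C (-1)) ^ numLeft k * (X - C 1) ^ numRight k * q) *
          ((1 + x) ^ testPow k * g.eval x)) = (-1 : ℝ) ^ numRight k • fun x =>
          (1 - x) ^ numRight k * (1 + x) ^ (numLeft k + testPow k) * (q.eval x * g.eval x) := by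
      funext x
      simp only [eval_mul, eval_pow, eval_sub, eval_X, eval_C, Pi.smul_apply, smul_eq_mul]
      rw [show x - 1 = -1 * (1 - x) by ring, mul_pow, pow_add]
      ring
    have h := LinearMap.congr_fun hmoment ⟨g, hg⟩
    simp only [testMoment_apply, evalFun_apply, LinearMap.zero_apply, hfun, map_smul] at h
    simpa using h
  simp

lemma finrank_pcondSpace (hkr : k ≤ r) : Module.finrank ℝ (PCondSpace r k) = r := by
  simp only [Module.finrank_prod, Module.finrank_fin_fun, Subspace.dual_finrank_eq,
    Module.finrank_eq_card_basis (degreeLT.basis ℝ _), Fintype.card_fin, ← add_assoc]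
  exact numLeft_add_numRight_add_testDim hkr

lemma pcondMap_surjective (hA1 : AssumptionA1 Ih r k) (h0k : 0 ≤ k) (hkr : k ≤ r) :
    Function.Surjective (pcondMap Ih r k) := by
  refine (LinearMap.injective_iff_surjective_of_finrank_eq_finrank ?_).1
    (pcondMap_injective hA1 h0k hkr)
  rw [finrank_pcondSpace hkr, Module.finrank_eq_card_basis (degreeLT.basis ℝ r), Fintype.card_fin]

lemma exists_pcondRef (hA1 : AssumptionA1 Ih r k) (h0k : 0 ≤ k) (hkr : k ≤ r) (v : ℝ → ℝ) :
    ∃ w, PCondRef Ih Ic r k v w :=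
  let ⟨p, hp⟩ := pcondMap_surjective hA1 h0k hkr (pcondData Ih Ic r k v)
  ⟨_, (pcondRef_eval_iff h0k hkr p v).2 hp⟩

lemma PCondRef.unique (hA1 : AssumptionA1 Ih r k) (h0k : 0 ≤ k) (hkr : k ≤ r)
    {v w₁ w₂ : ℝ → ℝ} (h₁ : PCondRef Ih Ic r k v w₁) (h₂ : PCondRef Ih Ic r k v w₂) :
    w₁ = w₂ := by
  obtain ⟨p₁, hp₁, rfl⟩ := (isPolyR_iff (by ring)).1 h₁.1
  obtain ⟨p₂, hp₂, rfl⟩ := (isPolyR_iff (by ring)).1 h₂.1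
  have h : p₁ = p₂ := congrArg Subtype.val <| pcondMap_injective hA1 h0k hkr <|
    ((pcondRef_eval_iff h0k hkr ⟨p₁, hp₁⟩ v).1 h₁).trans
      ((pcondRef_eval_iff h0k hkr ⟨p₂, hp₂⟩ v).1 h₂).symm
  rw [h]

lemma pcondRef_self {v : ℝ → ℝ} (hv : IsPolyR (r - 1) v) (hIc : Ic v = v) :
    PCondRef Ih Ic r k v v := by
  have hu : UniqueDiffOn ℝ (Icc (-1 : ℝ) 1) := uniqueDiffOn_Icc (by norm_num)
  exact ⟨hv, fun _ i _ => (hv.iteratedDerivWithin_eq i hu (by norm_num)).symm,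
    fun _ i _ => (hv.iteratedDerivWithin_eq i hu (by norm_num)).symm, fun _ _ _ => by rw [hIc]⟩

end PCond

theorem stmt_16_general (r : ℕ) (k : ℤ) (h0k : 0 ≤ k) (hkr : k ≤ (r : ℤ))
    (kI kIc : ℕ) (Ih : (ℝ → ℝ) →ₗ[ℝ] ℝ) (Ic : (ℝ → ℝ) →ₗ[ℝ] (ℝ → ℝ))
    (hA1 : AssumptionA1 Ih (r : ℤ) k) :
    (∀ v : ℝ → ℝ, ContDiffOn ℝ ((kJ k kI kIc : ℕ) : ℕ∞) v (Icc (-1 : ℝ) 1) →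
      ∃! w : ℝ → ℝ, PCondRef Ih Ic (r : ℤ) k v w) ∧
    (∀ rt : ℤ, (∀ q : ℝ → ℝ, IsPolyR rt q → Ic q = q) →
      ∀ v : ℝ → ℝ, IsPolyR (min rt ((r : ℤ) - 1)) v →
        ∀ w : ℝ → ℝ, PCondRef Ih Ic (r : ℤ) k v w → w = v) := by
  refine ⟨fun v _ => ?_, fun rt hIc v hv w hw => ?_⟩
  · obtain ⟨w, hw⟩ := exists_pcondRef (Ic := Ic) hA1 h0k hkr v
    exact ⟨w, hw, fun w' hw' => hw'.unique hA1 h0k hkr hw⟩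
  · exact hw.unique hA1 h0k hkr <|
      pcondRef_self (hv.mono (min_le_right _ _)) (hIc v (hv.mono (min_le_left _ _)))

/-- Lemma 5.1: well-definedness of the reference operator `P̂` and
polynomial reproduction. -/
theorem stmt_16 (r : ℕ) (hr : 1 ≤ r) (k : ℤ) (h0k : 0 ≤ k) (hkr : k ≤ (r : ℤ))
    (kI kIc : ℕ) (Ih : (ℝ → ℝ) →ₗ[ℝ] ℝ) (Ic : (ℝ → ℝ) →ₗ[ℝ] (ℝ → ℝ))
    (hIcSmooth : ∀ (l : ℕ) (v : ℝ → ℝ),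
      ContDiffOn ℝ ((max kIc l : ℕ) : ℕ∞) v (Icc (-1 : ℝ) 1) →
      ContDiffOn ℝ (l : ℕ∞) (Ic v) (Icc (-1 : ℝ) 1))
    (hA1 : AssumptionA1 Ih (r : ℤ) k) :
    (∀ v : ℝ → ℝ, ContDiffOn ℝ ((kJ k kI kIc : ℕ) : ℕ∞) v (Icc (-1 : ℝ) 1) →
      ∃! w : ℝ → ℝ, PCondRef Ih Ic (r : ℤ) k v w) ∧
    (∀ rt : ℤ, (∀ q : ℝ → ℝ, IsPolyR rt q → Ic q = q) →
      ∀ v : ℝ → ℝ, IsPolyR (min rt ((r : ℤ) - 1)) v →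
        ∀ w : ℝ → ℝ, PCondRef Ih Ic (r : ℤ) k v w → w = v) :=
  stmt_16_general r k h0k hkr kI kIc Ih Ic hA1
end
end
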